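/- arXiv:0805.2707 — 6 statements merged into one kernel-verified Lean document; each statement's English description precedes it below -/
import Mathlib

section
/- For a real number x with 1 - x - x² ≠ 0 and positive integers n, m, the following recurrence holds: ∑_{r=1}^{n} r^m F_r x^r = (1/(1 - x - x²)) ∑_{i=1}^{m} C(m,i) (-1)^{i+1} ∑_{r=1}^{n} r^{m-i} F_r x^r + (x²/(1 - x - x²)) ∑_{i=1}^{m} C(m,i) ∑_{r=1}^{n-1} r^{m-i} F_r x^r - n^m (F_{n+1} x^{n+1} + F_n x^{n+2}) / (1 - x - x²). -/
/-!
Write `a r = F_r x^r`; then `a (r + 2) = x a (r + 1) + x² a r`. Multiplying `∑ c r a r` by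
`1 - x - x²` and shifting indices gives, for any weight `c` with `c 0 = 0`, an expression in the
differences `c r - c (r - 1)` and `c (r + 1) - c r` plus a boundary term. For `c r = r^m` the
binomial theorem expands `r^m - (r - 1)^m` and `(r + 1)^m - r^m` into the two binomial sums.
-/

open Finset

section

variable {R : Type*} [CommRing R]

theorem add_pow_sub_pow_eq_sum_Icc (m : ℕ) (y z : R) :
    (z + y) ^ m - y ^ m = ∑ i ∈ Icc 1 m, (m.choose i : R) * z ^ i * y ^ (m - i) := by
  rw [add_pow, range_eq_Ico, sum_eq_sum_Ico_succ_bot (Nat.succ_pos m), zero_add,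
    Nat.succ_eq_add_one, Ico_add_one_right_eq_Icc]
  simp only [pow_zero, Nat.sub_zero, Nat.choose_zero_right, Nat.cast_one, one_mul, mul_one,
    add_sub_cancel_left]
  exact sum_congr rfl fun i _ => by ring

theorem sum_Icc_choose_mul_sum_pow_mul (m : ℕ) (z : R) (s : Finset ℕ) (a : ℕ → R) :
    ∑ i ∈ Icc 1 m, (m.choose i : R) * z ^ i * ∑ r ∈ s, (r : R) ^ (m - i) * a r =
      ∑ r ∈ s, (((r : R) + z) ^ m - (r : R) ^ m) * a r := by
  simp_rw [mul_sum]
  rw [sum_comm]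
  refine sum_congr rfl fun r _ => ?_
  rw [add_comm, add_pow_sub_pow_eq_sum_Icc, sum_mul]
  exact sum_congr rfl fun i _ => by ring

theorem mul_sum_Icc_mul_fib_mul_pow (c : ℕ → R) (hc : c 0 = 0) (x : R) (n : ℕ) :
    (1 - x - x ^ 2) * ∑ r ∈ Icc 1 n, c r * Nat.fib r * x ^ r =
      ∑ r ∈ Icc 1 n, (c r - c (r - 1)) * Nat.fib r * x ^ r
        + x ^ 2 * ∑ r ∈ Icc 1 (n - 1), (c (r + 1) - c r) * Nat.fib r * x ^ r
        - c n * (Nat.fib (n + 1) * x ^ (n + 1) + Nat.fib n * x ^ (n + 2)) := by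
  induction n with
  | zero => simp [hc]
  | succ n ih =>
    rcases n with _ | n
    · simp [hc]
      ring
    · simp only [Nat.add_sub_cancel] at ih ⊢
      simp only [sum_Icc_succ_top (show 1 ≤ n + 1 + 1 by omega)]
      simp only [sum_Icc_succ_top (show 1 ≤ n + 1 by omega), Nat.add_sub_cancel] at ih ⊢
      rw [Nat.fib_add_two (n := n + 1)]
      push_cast
      linear_combination ih

end

theorem stmt_2_general (n m : ℕ) (hm : 1 ≤ m) (x : ℝ)
    (hx : 1 - x - x ^ 2 ≠ 0) :
    ∑ r ∈ Finset.Icc 1 n, (r : ℝ) ^ m * (Nat.fib r : ℝ) * x ^ r =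
      (1 / (1 - x - x ^ 2)) *
        ∑ i ∈ Finset.Icc 1 m, (m.choose i : ℝ) * (-1) ^ (i + 1) *
          ∑ r ∈ Finset.Icc 1 n, (r : ℝ) ^ (m - i) * (Nat.fib r : ℝ) * x ^ r
      + (x ^ 2 / (1 - x - x ^ 2)) *
        ∑ i ∈ Finset.Icc 1 m, (m.choose i : ℝ) *
          ∑ r ∈ Finset.Icc 1 (n - 1), (r : ℝ) ^ (m - i) * (Nat.fib r : ℝ) * x ^ r
      - (n : ℝ) ^ m *
          ((Nat.fib (n + 1) : ℝ) * x ^ (n + 1) + (Nat.fib n : ℝ) * x ^ (n + 2))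
          / (1 - x - x ^ 2) := by
  have key := mul_sum_Icc_mul_fib_mul_pow (fun r : ℕ => (r : ℝ) ^ m)
    (by simp [Nat.one_le_iff_ne_zero.1 hm]) x n
  have backward : ∑ i ∈ Icc 1 m, (m.choose i : ℝ) * (-1) ^ (i + 1) *
        ∑ r ∈ Icc 1 n, (r : ℝ) ^ (m - i) * Nat.fib r * x ^ r =
      ∑ r ∈ Icc 1 n, ((r : ℝ) ^ m - ((r - 1 : ℕ) : ℝ) ^ m) * Nat.fib r * x ^ r := by
    have h := sum_Icc_choose_mul_sum_pow_mul m (-1) (Icc 1 n) fun r => (Nat.fib r * x ^ r : ℝ)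
    simp only [← mul_assoc] at h
    simp only [pow_succ, mul_neg, mul_one, neg_mul, sum_neg_distrib, h]
    rw [← sum_neg_distrib]
    refine sum_congr rfl fun r hr => ?_
    rw [Nat.cast_pred (mem_Icc.1 hr).1]
    ring
  have forward : ∑ i ∈ Icc 1 m, (m.choose i : ℝ) *
        ∑ r ∈ Icc 1 (n - 1), (r : ℝ) ^ (m - i) * Nat.fib r * x ^ r =
      ∑ r ∈ Icc 1 (n - 1), (((r + 1 : ℕ) : ℝ) ^ m - (r : ℝ) ^ m) * Nat.fib r * x ^ r := by
    have h := sum_Icc_choose_mul_sum_pow_mul m 1 (Icc 1 (n - 1)) fun r => (Nat.fib r * x ^ r : ℝ)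
    simp only [← mul_assoc, one_pow, mul_one] at h
    push_cast
    exact h
  rw [backward, forward]
  field_simp
  linear_combination key

theorem stmt_2 (n m : ℕ) (hn : 1 ≤ n) (hm : 1 ≤ m) (x : ℝ)
    (hx : 1 - x - x ^ 2 ≠ 0) :
    ∑ r ∈ Finset.Icc 1 n, (r : ℝ) ^ m * (Nat.fib r : ℝ) * x ^ r =
      (1 / (1 - x - x ^ 2)) *
        ∑ i ∈ Finset.Icc 1 m, (m.choose i : ℝ) * (-1) ^ (i + 1) *
          ∑ r ∈ Finset.Icc 1 n, (r : ℝ) ^ (m - i) * (Nat.fib r : ℝ) * x ^ r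
      + (x ^ 2 / (1 - x - x ^ 2)) *
        ∑ i ∈ Finset.Icc 1 m, (m.choose i : ℝ) *
          ∑ r ∈ Finset.Icc 1 (n - 1), (r : ℝ) ^ (m - i) * (Nat.fib r : ℝ) * x ^ r
      - (n : ℝ) ^ m *
          ((Nat.fib (n + 1) : ℝ) * x ^ (n + 1) + (Nat.fib n : ℝ) * x ^ (n + 2))
          / (1 - x - x ^ 2) :=
  stmt_2_general n m hm x hx
end

section
/- For positive integers n and m, ∑_{r=1}^{n} r^m F_r = ∑_{i=1}^{m} C(m,i) (-1)^i ∑_{r=1}^{n} r^{m-i} F_r - ∑_{i=1}^{m} C(m,i) ∑_{r=1}^{n-1} r^{m-i} F_r + n^m F_{n+2}. -/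
/-!
Expanding by the binomial theorem, the two double sums are `∑ ((r - 1)^m - r^m) F_r` and
`∑ ((r + 1)^m - r^m) F_r`. The resulting identity holds for any weight `g` with `g 0 = 0` in place
of `r ↦ r^m`, by induction on `n` using only `F_{k+2} = F_k + F_{k+1}`.
-/

open Finset

section

variable {R : Type*} [CommRing R]

theorem sum_Icc_one_choose_mul_pow (a x : R) (m : ℕ) :
    ∑ i ∈ Icc 1 m, (m.choose i : R) * a ^ i * x ^ (m - i) = (a + x) ^ m - x ^ m := by
  rw [add_pow, sum_range_succ', ← Ico_add_one_right_eq_Icc, sum_Ico_eq_sum_range,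
    Nat.add_sub_cancel]
  simp only [pow_zero, Nat.sub_zero, Nat.choose_zero_right, Nat.cast_one, one_mul, mul_one,
    add_sub_cancel_right, add_comm 1]
  exact sum_congr rfl fun i _ => by ring

theorem sum_Icc_one_choose_mul_sum_pow_mul {ι : Type*} (a : R) (m : ℕ) (s : Finset ι)
    (x w : ι → R) :
    ∑ i ∈ Icc 1 m, (m.choose i : R) * a ^ i * ∑ r ∈ s, x r ^ (m - i) * w r =
      ∑ r ∈ s, ((a + x r) ^ m - x r ^ m) * w r := by
  simp_rw [mul_sum, ← sum_Icc_one_choose_mul_pow, sum_mul]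
  rw [sum_comm]
  exact sum_congr rfl fun r _ => sum_congr rfl fun i _ => by ring

theorem sum_Icc_one_mul_fib (f : ℕ → R) (n : ℕ) :
    ∑ r ∈ Icc 1 n, f r * Nat.fib r = ∑ r ∈ range (n + 1), f r * Nat.fib r := by
  rw [Nat.range_succ_eq_Icc_zero, ← insert_Icc_add_one_left_eq_Icc n.zero_le,
    sum_insert (by simp)]
  simp

theorem sum_Icc_one_sub_one_mul_fib (f : ℕ → R) (n : ℕ) :
    ∑ r ∈ Icc 1 (n - 1), f r * Nat.fib r = ∑ r ∈ range n, f r * Nat.fib r := by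
  cases n with
  | zero => simp
  | succ n => exact sum_Icc_one_mul_fib f n

theorem sum_range_succ_mul_fib_eq (g : R → R) (hg : g 0 = 0) (n : ℕ) :
    ∑ r ∈ range (n + 1), g r * Nat.fib r =
      ∑ r ∈ range (n + 1), (g (r - 1) - g r) * Nat.fib r
        - ∑ r ∈ range n, (g (r + 1) - g r) * Nat.fib r + g n * Nat.fib (n + 2) := by
  induction n with
  | zero => simp [hg]
  | succ n ih =>
    have hfib (k : ℕ) : (Nat.fib (k + 2) : R) = Nat.fib k + Nat.fib (k + 1) := by
      rw [Nat.fib_add_two, Nat.cast_add]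
    rw [sum_range_succ, ih, sum_range_succ _ (n + 1),
      sum_range_succ (fun r : ℕ => (g (r + 1) - g r) * Nat.fib r) n]
    push_cast
    rw [add_sub_cancel_right]
    linear_combination (g n - g (n + 1)) * hfib n - g (n + 1) * hfib (n + 1)

end

theorem stmt_3_general (n m : ℕ) (hm : 1 ≤ m) :
    ∑ r ∈ Finset.Icc 1 n, (r : ℤ) ^ m * (Nat.fib r : ℤ) =
      ∑ i ∈ Finset.Icc 1 m, (m.choose i : ℤ) * (-1) ^ i *
          ∑ r ∈ Finset.Icc 1 n, (r : ℤ) ^ (m - i) * (Nat.fib r : ℤ)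
      - ∑ i ∈ Finset.Icc 1 m, (m.choose i : ℤ) *
          ∑ r ∈ Finset.Icc 1 (n - 1), (r : ℤ) ^ (m - i) * (Nat.fib r : ℤ)
      + (n : ℤ) ^ m * (Nat.fib (n + 2) : ℤ) := by
  have h := sum_Icc_one_choose_mul_sum_pow_mul (1 : ℤ) m (Icc 1 (n - 1)) (fun r : ℕ => (r : ℤ))
    (fun r => Nat.fib r)
  simp only [one_pow, mul_one] at h
  rw [sum_Icc_one_choose_mul_sum_pow_mul, h, sum_Icc_one_mul_fib, sum_Icc_one_mul_fib,
    sum_Icc_one_sub_one_mul_fib]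
  convert sum_range_succ_mul_fib_eq (fun x : ℤ => x ^ m) (zero_pow (by omega)) n using 4 <;> ring

theorem stmt_3 (n m : ℕ) (hn : 1 ≤ n) (hm : 1 ≤ m) :
    ∑ r ∈ Finset.Icc 1 n, (r : ℤ) ^ m * (Nat.fib r : ℤ) =
      ∑ i ∈ Finset.Icc 1 m, (m.choose i : ℤ) * (-1) ^ i *
          ∑ r ∈ Finset.Icc 1 n, (r : ℤ) ^ (m - i) * (Nat.fib r : ℤ)
      - ∑ i ∈ Finset.Icc 1 m, (m.choose i : ℤ) *
          ∑ r ∈ Finset.Icc 1 (n - 1), (r : ℤ) ^ (m - i) * (Nat.fib r : ℤ)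
      + (n : ℤ) ^ m * (Nat.fib (n + 2) : ℤ) :=
  stmt_3_general n m hm
end

section
/- For every positive integer n, ∑_{r=1}^{n} r² F_r = (n² + 2) F_{n+2} - (2n - 3) F_{n+3} - 8. -/
/- Induction on n: the increment of the right-hand side from n to n + 1 becomes
(n + 1)² F_{n+1} once F_{n+3} and F_{n+4} are expanded by the recurrence. -/

theorem stmt_5_general (n : ℕ) :
    ∑ r ∈ Finset.Icc 1 n, (r : ℤ) ^ 2 * (Nat.fib r : ℤ) =
      ((n : ℤ) ^ 2 + 2) * (Nat.fib (n + 2) : ℤ)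
        - (2 * (n : ℤ) - 3) * (Nat.fib (n + 3) : ℤ) - 8 := by
  induction n with
  | zero => simp [Nat.fib_add_two]
  | succ m ih =>
    rw [Finset.sum_Icc_succ_top (Nat.le_add_left 1 m), ih]
    have fib_m3 : Nat.fib (m + 3) = Nat.fib (m + 1) + Nat.fib (m + 2) := Nat.fib_add_two
    have fib_m4 : Nat.fib (m + 4) = Nat.fib (m + 2) + Nat.fib (m + 3) := Nat.fib_add_two
    push_cast [fib_m3, fib_m4]
    ring

theorem stmt_5 (n : ℕ) (hn : 1 ≤ n) :
    ∑ r ∈ Finset.Icc 1 n, (r : ℤ) ^ 2 * (Nat.fib r : ℤ) =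
      ((n : ℤ) ^ 2 + 2) * (Nat.fib (n + 2) : ℤ)
        - (2 * (n : ℤ) - 3) * (Nat.fib (n + 3) : ℤ) - 8 :=
  stmt_5_general n
end

section
/- For every integer n ≥ 2, ∑_{r=1}^{n} (-1)^r r F_r = (-1)^n (n+1) F_{n-1} + (-1)^{n-1} F_{n-2} - 2. -/
open Finset

-- The theorem at `n = m + 2`, stated so that no truncated subtraction occurs.
theorem sum_Icc_neg_one_pow_mul_mul_fib (m : ℕ) :
    ∑ r ∈ Icc 1 (m + 2), (-1 : ℤ) ^ r * (r : ℤ) * (Nat.fib r : ℤ) =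
      (-1) ^ m * (((m : ℤ) + 3) * Nat.fib (m + 1) - Nat.fib m) - 2 := by
  induction m with
  | zero => decide
  | succ m ih =>
    rw [sum_Icc_succ_top (by omega), ih]
    simp only [Nat.fib_add_two]
    push_cast
    ring

theorem stmt_8 (n : ℕ) (hn : 2 ≤ n) :
    ∑ r ∈ Finset.Icc 1 n, (-1 : ℤ) ^ r * (r : ℤ) * (Nat.fib r : ℤ) =
      (-1) ^ n * ((n : ℤ) + 1) * (Nat.fib (n - 1) : ℤ)
        + (-1) ^ (n - 1) * (Nat.fib (n - 2) : ℤ) - 2 := by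
  obtain ⟨m, rfl⟩ := Nat.exists_eq_add_of_le' hn
  rw [sum_Icc_neg_one_pow_mul_mul_fib, show m + 2 - 1 = m + 1 by omega, Nat.add_sub_cancel]
  push_cast
  ring
end

section
/- For every integer m ≥ 1 and every real x with |x| < 1/φ, where φ = (1+√5)/2, the following recurrence holds between convergent series: ∑_{r=1}^{∞} r^m F_r x^r = (1/(1 - x - x²)) ∑_{i=1}^{m} C(m,i) (-1)^{i+1} ∑_{r=1}^{∞} r^{m-i} F_r x^r + (x²/(1 - x - x²)) ∑_{i=1}^{m} C(m,i) ∑_{r=1}^{∞} r^{m-i} F_r x^r. -/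
/-!
With `S_j = ∑ r^j F_r x^r`, expanding `(r - 1)^m` and `(r + 1)^m` binomially turns the claim into
`∑ (r-1)^m F_r x^r = x S_m + x² ∑ (r+1)^m F_r x^r`. This is `F_{r+2} = F_{r+1} + F_r` after
shifting the index by 2: the terms `r = 0, 1` vanish because `F_0 = 0` and `0^m = 0`.
Solving for `S_m` only needs `1 - x - x² = (φ⁻¹ - x)(φ + x) ≠ 0`.
-/

open Finset Real goldenRatio

noncomputable def fibMoment (j : ℕ) (x : ℝ) : ℝ :=
  ∑' r : ℕ, (r : ℝ) ^ j * Nat.fib r * x ^ r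

lemma Nat.cast_fib_le_goldenRatio_pow (n : ℕ) : (Nat.fib n : ℝ) ≤ φ ^ n := by
  cases n with
  | zero => simp
  | succ n =>
    have := goldenRatio_mul_fib_succ_add_fib n
    nlinarith [one_lt_goldenRatio, (Nat.fib n).cast_nonneg (α := ℝ),
      (Nat.fib (n + 1)).cast_nonneg (α := ℝ)]

lemma summable_pow_mul_fib_mul_pow (j : ℕ) {x : ℝ} (hx : |x| < φ⁻¹) :
    Summable fun r : ℕ => (r : ℝ) ^ j * Nat.fib r * x ^ r := by
  have hφx : ‖φ * |x|‖ < 1 := by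
    rw [norm_of_nonneg (by positivity)]
    exact (mul_lt_mul_of_pos_left hx goldenRatio_pos).trans_eq
      (mul_inv_cancel₀ goldenRatio_ne_zero)
  refine (summable_pow_mul_geometric_of_norm_lt_one j hφx).of_norm_bounded fun r => ?_
  rw [norm_mul, norm_mul, norm_pow, mul_pow, ← mul_assoc, norm_pow, Real.norm_natCast,
    Real.norm_natCast, norm_eq_abs]
  gcongr
  exact Nat.cast_fib_le_goldenRatio_pow r

lemma one_sub_sub_sq_pos {x : ℝ} (hx : |x| < φ⁻¹) : 0 < 1 - x - x ^ 2 := by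
  have hinv : φ⁻¹ = φ - 1 := by rw [inv_goldenRatio, ← one_sub_goldenConj]; ring
  have hfactor : 1 - x - x ^ 2 = (φ⁻¹ - x) * (φ + x) := by
    rw [hinv]; linear_combination (-1 : ℝ) * goldenRatio_sq
  obtain ⟨hlo, hhi⟩ := abs_lt.mp hx
  rw [hfactor]
  exact mul_pos (by linarith) (by linarith [one_lt_goldenRatio])

lemma hasSum_add_pow_mul (a : ℕ → ℝ) (ha : ∀ j, Summable fun r : ℕ => (r : ℝ) ^ j * a r)
    (m : ℕ) (c : ℝ) :
    HasSum (fun r : ℕ => ((r : ℝ) + c) ^ m * a r)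
      (∑ i ∈ range (m + 1), m.choose i * c ^ i * ∑' r : ℕ, (r : ℝ) ^ (m - i) * a r) := by
  have hterm (r : ℕ) : ((r : ℝ) + c) ^ m * a r =
      ∑ i ∈ range (m + 1), m.choose i * c ^ i * ((r : ℝ) ^ (m - i) * a r) := by
    rw [add_comm, add_pow, sum_mul]
    exact sum_congr rfl fun i _ => by ring
  simp only [hterm]
  exact hasSum_sum fun i _ => ((ha (m - i)).hasSum.mul_left _)

lemma sum_range_succ_eq_add_sum_Icc {M : Type*} [AddCommMonoid M] (f : ℕ → M) (m : ℕ) :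
    ∑ i ∈ range (m + 1), f i = f 0 + ∑ i ∈ Icc 1 m, f i := by
  rw [sum_range_eq_add_Ico _ (by omega : 0 < m + 1), Finset.Ico_add_one_right_eq_Icc]

lemma hasSum_add_pow_mul_fib_mul_pow (m : ℕ) (c : ℝ) {x : ℝ} (hx : |x| < φ⁻¹) :
    HasSum (fun r : ℕ => ((r : ℝ) + c) ^ m * Nat.fib r * x ^ r)
      (fibMoment m x + ∑ i ∈ Icc 1 m, m.choose i * c ^ i * fibMoment (m - i) x) := by
  have := hasSum_add_pow_mul (fun r => Nat.fib r * x ^ r)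
    (fun j => by simpa only [mul_assoc] using summable_pow_mul_fib_mul_pow j hx) m c
  simp only [sum_range_succ_eq_add_sum_Icc, ← mul_assoc] at this
  simpa [fibMoment] using this

lemma hasSum_mul_fib_mul_pow_of_shifts (w : ℕ → ℝ) {x a b : ℝ}
    (ha : HasSum (fun r : ℕ => w (r + 1) * Nat.fib r * x ^ r) a)
    (hb : HasSum (fun r : ℕ => w (r + 2) * Nat.fib r * x ^ r) b) :
    HasSum (fun r : ℕ => w r * Nat.fib r * x ^ r) (w 1 * x + x * a + x ^ 2 * b) := by
  have ha' : HasSum (fun r : ℕ => w (r + 2) * Nat.fib (r + 1) * x ^ (r + 1)) a := by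
    simpa using (hasSum_nat_add_iff' 1).mpr ha
  rw [← hasSum_nat_add_iff' 2]
  have hvalue : w 1 * x + x * a + x ^ 2 * b - ∑ i ∈ range 2, w i * Nat.fib i * x ^ i =
      x * a + x ^ 2 * b := by
    simp [sum_range_succ]
    ring
  rw [hvalue]
  refine ((ha'.mul_left x).add (hb.mul_left (x ^ 2))).congr_fun fun r => ?_
  rw [Nat.fib_add_two]
  push_cast
  ring

lemma one_sub_sub_sq_mul_fibMoment {m : ℕ} (hm : m ≠ 0) {x : ℝ} (hx : |x| < φ⁻¹) :
    (1 - x - x ^ 2) * fibMoment m x =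
      ∑ i ∈ Icc 1 m, m.choose i * (-1) ^ (i + 1) * fibMoment (m - i) x +
        x ^ 2 * ∑ i ∈ Icc 1 m, m.choose i * fibMoment (m - i) x := by
  have hshift1 :
      HasSum (fun r : ℕ => (((r + 1 : ℕ) : ℝ) + -1) ^ m * Nat.fib r * x ^ r) (fibMoment m x) := by
    simpa [fibMoment] using (summable_pow_mul_fib_mul_pow m hx).hasSum
  have hshift2 : HasSum (fun r : ℕ => (((r + 2 : ℕ) : ℝ) + -1) ^ m * Nat.fib r * x ^ r)
      (fibMoment m x + ∑ i ∈ Icc 1 m, m.choose i * fibMoment (m - i) x) := by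
    convert hasSum_add_pow_mul_fib_mul_pow m 1 hx using 3 with r
    · push_cast; ring
    · simp
  have hcompare := (hasSum_add_pow_mul_fib_mul_pow m (-1) hx).unique
    (hasSum_mul_fib_mul_pow_of_shifts _ hshift1 hshift2)
  have hsign : ∑ i ∈ Icc 1 m, m.choose i * (-1) ^ i * fibMoment (m - i) x =
      -∑ i ∈ Icc 1 m, m.choose i * (-1) ^ (i + 1) * fibMoment (m - i) x := by
    rw [← sum_neg_distrib]
    exact sum_congr rfl fun i _ => by ring
  rw [hsign, Nat.cast_one, add_neg_cancel, zero_pow hm] at hcompare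
  linear_combination hcompare

theorem stmt_13 (m : ℕ) (hm : 1 ≤ m) (x : ℝ)
    (hx : |x| < 1 / ((1 + Real.sqrt 5) / 2)) :
    ∑' r : ℕ, (r : ℝ) ^ m * (Nat.fib r : ℝ) * x ^ r =
      (1 / (1 - x - x ^ 2)) *
        ∑ i ∈ Finset.Icc 1 m, (m.choose i : ℝ) * (-1) ^ (i + 1) *
          ∑' r : ℕ, (r : ℝ) ^ (m - i) * (Nat.fib r : ℝ) * x ^ r
      + (x ^ 2 / (1 - x - x ^ 2)) *
        ∑ i ∈ Finset.Icc 1 m, (m.choose i : ℝ) *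
          ∑' r : ℕ, (r : ℝ) ^ (m - i) * (Nat.fib r : ℝ) * x ^ r := by
  rw [one_div] at hx
  have hrec := one_sub_sub_sq_mul_fibMoment (Nat.one_le_iff_ne_zero.mp hm) hx
  simp only [fibMoment] at hrec
  field_simp [(one_sub_sub_sq_pos hx).ne']
  linear_combination hrec
end

section
/- The series ∑_{r=1}^{∞} r F_r / 3^r converges and its sum equals 6/5. -/
open Real goldenRatio

/-!
By Binet's formula `r F_r x^r = (r (φx)^r - r (ψx)^r) / √5`, so the series is a difference of two
differentiated geometric series. Since `(1 - φx)(1 - ψx) = 1 - x - x²`, the two sums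
`φx / (1 - φx)² - ψx / (1 - ψx)²` combine to `√5 x (1 + x²) / (1 - x - x²)²`; at `x = 1/3` this is `6/5`.
-/

lemma abs_goldenConj_lt_goldenRatio : |ψ| < φ := by
  rw [abs_of_neg goldenConj_neg]
  linarith [neg_one_lt_goldenConj, one_lt_goldenRatio]

lemma div_one_sub_sq_sub_div_one_sub_sq {a b : ℝ} (ha : a ≠ 1) (hb : b ≠ 1) :
    a / (1 - a) ^ 2 - b / (1 - b) ^ 2 = (a - b) * (1 - a * b) / ((1 - a) * (1 - b)) ^ 2 := by
  have ha' : 1 - a ≠ 0 := sub_ne_zero.mpr (Ne.symm ha)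
  have hb' : 1 - b ≠ 0 := sub_ne_zero.mpr (Ne.symm hb)
  field_simp
  ring

theorem hasSum_coe_mul_fib_mul_pow {x : ℝ} (hx : |x| < φ⁻¹) :
    HasSum (fun r : ℕ => (r : ℝ) * Nat.fib r * x ^ r) (x * (1 + x ^ 2) / (1 - x - x ^ 2) ^ 2) := by
  have hφx : |φ * x| < 1 := by
    rw [abs_mul, abs_of_pos goldenRatio_pos]
    exact (mul_lt_mul_of_pos_left hx goldenRatio_pos).trans_eq (mul_inv_cancel₀ goldenRatio_ne_zero)
  have hψx : |ψ * x| < 1 := calc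
    |ψ * x| ≤ |φ * x| := by
      rw [abs_mul, abs_mul, abs_of_pos goldenRatio_pos]
      gcongr
      exact abs_goldenConj_lt_goldenRatio.le
    _ < 1 := hφx
  have binet (r : ℕ) : (r : ℝ) * Nat.fib r * x ^ r = (r * (φ * x) ^ r - r * (ψ * x) ^ r) / √5 := by
    rw [coe_fib_eq, mul_pow, mul_pow]
    ring
  have hvalue : x * (1 + x ^ 2) / (1 - x - x ^ 2) ^ 2
      = (φ * x / (1 - φ * x) ^ 2 - ψ * x / (1 - ψ * x) ^ 2) / √5 := by
    have hfactor : (1 - φ * x) * (1 - ψ * x) = 1 - x - x ^ 2 := by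
      linear_combination (-x) * goldenRatio_add_goldenConj + x ^ 2 * goldenRatio_mul_goldenConj
    rw [div_one_sub_sq_sub_div_one_sub_sq (abs_lt.mp hφx).2.ne (abs_lt.mp hψx).2.ne, hfactor,
      ← mul_sub_right_distrib, goldenRatio_sub_goldenConj, mul_mul_mul_comm, goldenRatio_mul_goldenConj]
    have : (√5 : ℝ) ≠ 0 := by positivity
    field_simp
    ring
  rw [hvalue]
  have h1 := hasSum_coe_mul_geometric_of_norm_lt_one (r := φ * x) hφx
  have h2 := hasSum_coe_mul_geometric_of_norm_lt_one (r := ψ * x) hψx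
  exact ((h1.sub h2).div_const √5).congr_fun binet

theorem stmt_14 :
    HasSum (fun r : ℕ => (r : ℝ) * (Nat.fib r : ℝ) / 3 ^ r) (6 / 5) := by
  have hx : |(3 : ℝ)⁻¹| < φ⁻¹ := by
    rw [abs_of_pos (by norm_num)]
    exact inv_strictAnti₀ goldenRatio_pos (goldenRatio_lt_two.trans (by norm_num))
  convert hasSum_coe_mul_fib_mul_pow hx using 1
  · simp only [inv_pow, div_eq_mul_inv]
  · norm_num
end
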